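/- Let n ≥ 1 and let i, j ∈ {1,2,3} be distinct pegs with intermediate peg k = 6 − i − j. If no minimum-cost solution from peg i to peg j with n discs contains a move of a disc from peg i to peg j, then w_{ij} > w_{ik} + w_{kj} + max(0, 2·C_{n−1}^{i,j} + C_{n−1}^{j,i} − C_{n−1}^{i,k} − C_{n−1}^{k,j}) and C_n^{i,j} = 2·C_{n−1}^{i,j} + C_{n−1}^{j,i} + w_{ik} + w_{kj}. -/

import Mathlib

/-- Pegs are natural numbers; the valid pegs are 1, 2, 3. -/
abbrev Peg := ℕ

/-- A peg is valid if it is one of 1, 2, 3. -/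
def validPeg (p : Peg) : Prop := p = 1 ∨ p = 2 ∨ p = 3

/-- A configuration of `n` discs assigns to each disc (indexed by size,
smaller index = smaller disc) the peg it lies on. -/
abbrev Conf (n : ℕ) := Fin n → Peg

/-- `LegalMove c c' i j` : the configuration `c'` results from `c` by a single
legal move of the topmost (smallest) disc of peg `i` onto a different peg `j`,
where every disc currently on peg `j` is larger. -/
def LegalMove {n : ℕ} (c c' : Conf n) (i j : Peg) : Prop :=
  validPeg i ∧ validPeg j ∧ i ≠ j ∧
  ∃ d : Fin n, c d = i ∧ (∀ d', c d' = i → d ≤ d') ∧ (∀ d', c d' = j → d < d') ∧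
    c' d = j ∧ (∀ d', d' ≠ d → c' d' = c d')

/-- `Solves c ms c'` : the list of moves `ms` (each move recorded as the ordered
pair (source peg, destination peg)) legally transforms configuration `c` into `c'`. -/
inductive Solves {n : ℕ} : Conf n → List (Peg × Peg) → Conf n → Prop
  | nil (c : Conf n) : Solves c [] c
  | cons {c c' c'' : Conf n} {ms : List (Peg × Peg)} {i j : Peg} :
      LegalMove c c' i j → Solves c' ms c'' → Solves c ((i, j) :: ms) c''

/-- A solution from peg `i` to peg `j` with `n` discs: a list of legal moves
transforming the configuration with all discs on peg `i` into the configuration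
with all discs on peg `j`. -/
def IsSolution (n : ℕ) (i j : Peg) (ms : List (Peg × Peg)) : Prop :=
  Solves (fun _ : Fin n => i) ms (fun _ : Fin n => j)

/-- Total cost of a sequence of moves with respect to the weight function `w`. -/
noncomputable def cost (w : Peg → Peg → ℝ) (ms : List (Peg × Peg)) : ℝ :=
  (ms.map fun m => w m.1 m.2).sum

/-- `C w n i j` : the optimal (minimum) total cost over all solutions
from peg `i` to peg `j` with `n` discs. -/
noncomputable def C (w : Peg → Peg → ℝ) (n : ℕ) (i j : Peg) : ℝ :=
  sInf {x : ℝ | ∃ ms : List (Peg × Peg), IsSolution n i j ms ∧ cost w ms = x}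



section HanoiAux

variable {w : Peg → Peg → ℝ}

lemma cost_nil : cost w [] = 0 := by simp [cost]

lemma cost_cons (p q : Peg) (ms : List (Peg × Peg)) :
    cost w ((p, q) :: ms) = w p q + cost w ms := by simp [cost]

lemma cost_append (l1 l2 : List (Peg × Peg)) :
    cost w (l1 ++ l2) = cost w l1 + cost w l2 := by simp [cost]

lemma cost_nonneg (hw : ∀ i j : Peg, 0 ≤ w i j) (ms : List (Peg × Peg)) :
    0 ≤ cost w ms := by
  refine List.sum_nonneg ?_
  intro x hx
  simp only [List.mem_map] at hx
  obtain ⟨m, -, rfl⟩ := hx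
  exact hw _ _

lemma solves_nil_eq {n : ℕ} {c c' : Conf n} (h : Solves c [] c') : c = c' := by
  cases h; rfl

lemma solves_cons_inv {n : ℕ} {c c'' : Conf n} {p q : Peg} {ms : List (Peg × Peg)}
    (h : Solves c ((p, q) :: ms) c'') :
    ∃ c', LegalMove c c' p q ∧ Solves c' ms c'' := by
  cases h with
  | cons hm hs => exact ⟨_, hm, hs⟩

lemma solves_append : ∀ {l1 l2 : List (Peg × Peg)} {n : ℕ} {c c' c'' : Conf n},
    Solves c l1 c' → Solves c' l2 c'' → Solves c (l1 ++ l2) c'' := by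
  intro l1
  induction l1 with
  | nil => intro l2 n c c' c'' h1 h2; rw [solves_nil_eq h1]; simpa using h2
  | cons hd tl ih =>
      intro l2 n c c' c'' h1 h2
      obtain ⟨p, q⟩ := hd
      obtain ⟨cm, hm, hs⟩ := solves_cons_inv h1
      exact Solves.cons hm (ih hs h2)

lemma snoc_const (m : ℕ) (a : Peg) :
    (Fin.snoc (fun _ : Fin m => a) a : Conf (m + 1)) = fun _ => a := by
  funext d
  induction d using Fin.lastCases with
  | last => simp
  | cast e => simp

lemma legal_lift {m : ℕ} {c c' : Conf m} {a b p : Peg} (h : LegalMove c c' a b) :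
    LegalMove (Fin.snoc c p) (Fin.snoc c' p) a b := by
  obtain ⟨hva, hvb, hab, d, h1, h2, h3, h4, h5⟩ := h
  refine ⟨hva, hvb, hab, d.castSucc, by simpa using h1, ?_, ?_, by simpa using h4, ?_⟩
  · intro d' hd'
    induction d' using Fin.lastCases with
    | last => exact (Fin.castSucc_lt_last d).le
    | cast e =>
        rw [Fin.snoc_castSucc] at hd'
        exact Fin.castSucc_le_castSucc_iff.mpr (h2 e hd')
  · intro d' hd'
    induction d' using Fin.lastCases with
    | last => exact Fin.castSucc_lt_last d
    | cast e =>
        rw [Fin.snoc_castSucc] at hd'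
        exact Fin.castSucc_lt_castSucc_iff.mpr (h3 e hd')
  · intro d' hd'
    induction d' using Fin.lastCases with
    | last => simp
    | cast e =>
        rw [Fin.snoc_castSucc, Fin.snoc_castSucc]
        exact h5 e (fun he => hd' (by rw [he]))

lemma solves_lift {m : ℕ} {p : Peg} : ∀ {ms : List (Peg × Peg)} {c c' : Conf m},
    Solves c ms c' → Solves (Fin.snoc c p) ms (Fin.snoc c' p) := by
  intro ms
  induction ms with
  | nil => intro c c' h; rw [solves_nil_eq h]; exact Solves.nil _
  | cons hd tl ih =>
      intro c c' h
      obtain ⟨a, b⟩ := hd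
      obtain ⟨cm, hm, hs⟩ := solves_cons_inv h
      exact Solves.cons (legal_lift hm) (ih hs)

lemma legal_big {m : ℕ} {a b z : Peg} (hva : validPeg a) (hvb : validPeg b)
    (hab : a ≠ b) (hza : z ≠ a) (hzb : z ≠ b) :
    LegalMove (Fin.snoc (fun _ : Fin m => z) a) (Fin.snoc (fun _ : Fin m => z) b) a b := by
  refine ⟨hva, hvb, hab, Fin.last m, by simp, ?_, ?_, by simp, ?_⟩
  · intro d' hd'
    induction d' using Fin.lastCases with
    | last => exact le_rfl
    | cast e => rw [Fin.snoc_castSucc] at hd'; exact absurd hd' hza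
  · intro d' hd'
    induction d' using Fin.lastCases with
    | last => rw [Fin.snoc_last] at hd'; exact absurd hd' hab
    | cast e => rw [Fin.snoc_castSucc] at hd'; exact absurd hd' hzb
  · intro d' hd'
    induction d' using Fin.lastCases with
    | last => exact absurd rfl hd'
    | cast e => simp

end HanoiAux
section HanoiAux2

variable {w : Peg → Peg → ℝ}

instance validPeg.dec (p : Peg) : Decidable (validPeg p) := by
  unfold validPeg; infer_instance

lemma peg_arith {i j k : Peg} (hvi : validPeg i) (hvj : validPeg j) (hij : i ≠ j)
    (hk : k = 6 - i - j) :
    validPeg k ∧ k ≠ i ∧ k ≠ j ∧ 6 - i - k = j ∧ 6 - k - i = j ∧ 6 - k - j = i := by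
  subst hk
  rcases hvi with rfl | rfl | rfl <;> rcases hvj with rfl | rfl | rfl <;>
    revert hij <;> decide

lemma third_valid {a b : Peg} (ha : validPeg a) (hb : validPeg b) (hab : a ≠ b) :
    validPeg (6 - a - b) ∧ 6 - a - b ≠ a ∧ 6 - a - b ≠ b := by
  rcases ha with rfl | rfl | rfl <;> rcases hb with rfl | rfl | rfl <;>
    revert hab <;> decide

lemma third_unique {a b s : Peg} (ha : validPeg a) (hb : validPeg b) (hs : validPeg s)
    (hab : a ≠ b) (hsa : s ≠ a) (hsb : s ≠ b) : s = 6 - a - b := by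
  rcases ha with rfl | rfl | rfl <;> rcases hb with rfl | rfl | rfl <;>
    rcases hs with rfl | rfl | rfl <;> revert hab hsa hsb <;> decide

lemma peg_resolve {i j k x : Peg} (hvi : validPeg i) (hvj : validPeg j) (hvk : validPeg k)
    (hvx : validPeg x) (hij : i ≠ j) (hki : k ≠ i) (hkj : k ≠ j) (hxi : x ≠ i) :
    x = j ∨ x = k := by
  rcases hvx with rfl | rfl | rfl <;> rcases hvi with rfl | rfl | rfl <;>
    rcases hvj with rfl | rfl | rfl <;> rcases hvk with rfl | rfl | rfl <;>
    revert hij hki hkj hxi <;> decide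

lemma build_two {n : ℕ} {a b z : Peg} {s1 s2 : List (Peg × Peg)}
    (hva : validPeg a) (hvb : validPeg b) (hab : a ≠ b) (hza : z ≠ a) (hzb : z ≠ b)
    (h1 : IsSolution n a z s1) (h2 : IsSolution n z b s2) :
    IsSolution (n + 1) a b (s1 ++ (a, b) :: s2) := by
  show Solves _ _ _
  rw [← snoc_const n a, ← snoc_const n b]
  exact solves_append (solves_lift h1)
    (Solves.cons (legal_big hva hvb hab hza hzb) (solves_lift h2))

lemma build_three {n : ℕ} {a b k : Peg} {s1 s2 s3 : List (Peg × Peg)}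
    (hva : validPeg a) (hvb : validPeg b) (hvk : validPeg k)
    (hab : a ≠ b) (hka : k ≠ a) (hkb : k ≠ b)
    (h1 : IsSolution n a b s1) (h2 : IsSolution n b a s2) (h3 : IsSolution n a b s3) :
    IsSolution (n + 1) a b (s1 ++ (a, k) :: (s2 ++ (k, b) :: s3)) := by
  show Solves _ _ _
  rw [← snoc_const n a, ← snoc_const n b]
  refine solves_append (solves_lift h1) (Solves.cons (legal_big hva hvk (Ne.symm hka) hab.symm (Ne.symm hkb)) ?_)
  exact solves_append (solves_lift h2) (Solves.cons (legal_big hvk hvb hkb (Ne.symm hka) hab) (solves_lift h3))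

lemma exists_sol : ∀ (n : ℕ) (a b : Peg), validPeg a → validPeg b →
    ∃ ms, IsSolution n a b ms := by
  intro n
  induction n with
  | zero =>
      intro a b _ _
      have he : (fun _ : Fin 0 => a) = (fun _ : Fin 0 => b) := funext fun d => d.elim0
      exact ⟨[], by show Solves _ _ _; rw [he]; exact Solves.nil _⟩
  | succ n ih =>
      intro a b hva hvb
      by_cases hab : a = b
      · subst hab; exact ⟨[], Solves.nil _⟩
      · obtain ⟨hvz, hza, hzb⟩ := third_valid hva hvb hab
        obtain ⟨s1, h1⟩ := ih a (6 - a - b) hva hvz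
        obtain ⟨s2, h2⟩ := ih (6 - a - b) b hvz hvb
        exact ⟨_, build_two hva hvb hab hza hzb h1 h2⟩

lemma C_bddBelow (hw : ∀ i j : Peg, 0 ≤ w i j) (n : ℕ) (a b : Peg) :
    BddBelow {x : ℝ | ∃ ms, IsSolution n a b ms ∧ cost w ms = x} :=
  ⟨0, by rintro x ⟨ms, -, rfl⟩; exact cost_nonneg hw ms⟩

lemma C_le_cost (hw : ∀ i j : Peg, 0 ≤ w i j) {n : ℕ} {a b : Peg} {ms : List (Peg × Peg)}
    (h : IsSolution n a b ms) : C w n a b ≤ cost w ms := by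
  unfold C
  exact csInf_le (C_bddBelow hw n a b) ⟨ms, h, rfl⟩

lemma le_C {r : ℝ} {n : ℕ} {a b : Peg} (hex : ∃ ms, IsSolution n a b ms)
    (h : ∀ ms, IsSolution n a b ms → r ≤ cost w ms) : r ≤ C w n a b := by
  unfold C
  apply le_csInf
  · obtain ⟨ms, hms⟩ := hex; exact ⟨cost w ms, ms, hms, rfl⟩
  · rintro x ⟨ms, hms, rfl⟩; exact h ms hms

lemma C_nonneg (hw : ∀ i j : Peg, 0 ≤ w i j) (n : ℕ) (a b : Peg) : 0 ≤ C w n a b := by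
  unfold C
  apply Real.sInf_nonneg
  rintro x ⟨ms, -, rfl⟩
  exact cost_nonneg hw ms

lemma solves_zero {c c' : Conf 0} {ms : List (Peg × Peg)} (h : Solves c ms c') : ms = [] := by
  cases h with
  | nil => rfl
  | cons hm _ => obtain ⟨-, -, -, d, -⟩ := hm; exact d.elim0

lemma C_zero (a b : Peg) : C w 0 a b = 0 := by
  have hset : {x : ℝ | ∃ ms, IsSolution 0 a b ms ∧ cost w ms = x} = {0} := by
    ext x
    constructor
    · rintro ⟨ms, hms, rfl⟩
      rw [solves_zero hms]
      simp [cost]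
    · rintro rfl
      have he : (fun _ : Fin 0 => a) = (fun _ : Fin 0 => b) := funext fun d => d.elim0
      exact ⟨[], by show Solves _ _ _; rw [he]; exact Solves.nil _, by simp [cost]⟩
  unfold C
  rw [hset, csInf_singleton]

lemma C_self (hw : ∀ i j : Peg, 0 ≤ w i j) (n : ℕ) (a : Peg) : C w n a a = 0 := by
  refine le_antisymm ?_ (C_nonneg hw n a a)
  have h := C_le_cost hw (show IsSolution n a a [] from Solves.nil _)
  simpa [cost] using h

lemma C_triangle (hw : ∀ i j : Peg, 0 ≤ w i j) {n : ℕ} {a b c : Peg}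
    (hva : validPeg a) (hvb : validPeg b) (hvc : validPeg c) :
    C w n a b ≤ C w n a c + C w n c b := by
  obtain ⟨t0, ht0⟩ := exists_sol n c b hvc hvb
  obtain ⟨s0, hs0⟩ := exists_sol n a c hva hvc
  have key : ∀ x ∈ {x : ℝ | ∃ ms, IsSolution n a c ms ∧ cost w ms = x},
      C w n a b - C w n c b ≤ x := by
    rintro x ⟨s, hs, rfl⟩
    have h2 : C w n a b - cost w s ≤ C w n c b := by
      apply le_C ⟨t0, ht0⟩
      intro t ht
      have := C_le_cost hw (show IsSolution n a b (s ++ t) from solves_append hs ht)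
      rw [cost_append] at this
      linarith
    linarith
  have h3 : C w n a b - C w n c b ≤ C w n a c := by
    unfold C
    exact le_csInf ⟨cost w s0, s0, hs0, rfl⟩ key
  linarith

end HanoiAux2
section HanoiAux3

variable {w : Peg → Peg → ℝ}

/-- Projection: delete the moves of the largest disc. -/
lemma proj (hw : ∀ i j : Peg, 0 ≤ w i j) :
    ∀ (ms : List (Peg × Peg)) {m : ℕ} (c c' : Conf m) (a b : Peg),
      Solves (Fin.snoc c a) ms (Fin.snoc c' b) →
      ∃ ms', Solves c ms' c' ∧ cost w ms' ≤ cost w ms := by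
  intro ms
  induction ms with
  | nil =>
      intro m c c' a b h
      have he := solves_nil_eq h
      have hcc : c = c' := by
        funext d
        have := congrFun he d.castSucc
        simpa using this
      exact ⟨[], by rw [hcc]; exact Solves.nil _, le_rfl⟩
  | cons hd tl ih =>
      intro m c c' a b h
      obtain ⟨p, q⟩ := hd
      obtain ⟨X', hm, hs⟩ := solves_cons_inv h
      obtain ⟨hvp, hvq, hpq, d, h1, h2, h3, h4, h5⟩ := id hm
      rcases Fin.eq_castSucc_or_eq_last d with ⟨e, rfl⟩ | rfl
      · -- a small disc moves
        set c₂ : Conf m := fun d' => X' d'.castSucc with hc₂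
        have hX' : X' = Fin.snoc c₂ a := by
          funext d'
          induction d' using Fin.lastCases with
          | last =>
              rw [Fin.snoc_last, h5 _ (Fin.castSucc_lt_last e).ne', Fin.snoc_last]
          | cast e' => rw [Fin.snoc_castSucc]
        have hlm : LegalMove c c₂ p q := by
          refine ⟨hvp, hvq, hpq, e, by simpa using h1, ?_, ?_, ?_, ?_⟩
          · intro e' he'
            have := h2 e'.castSucc (by simpa using he')
            exact Fin.castSucc_le_castSucc_iff.mp this
          · intro e' he'
            exact Fin.castSucc_lt_castSucc_iff.mp (h3 e'.castSucc (by simpa using he'))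
          · exact h4
          · intro e' he'
            show X' e'.castSucc = c e'
            rw [h5 _ (fun hcontra => he' (Fin.castSucc_injective _ hcontra)), Fin.snoc_castSucc]
        rw [hX'] at hs
        obtain ⟨ms', hms', hc⟩ := ih c₂ c' a b hs
        refine ⟨(p, q) :: ms', Solves.cons hlm hms', ?_⟩
        rw [cost_cons, cost_cons]
        linarith
      · -- the big disc moves
        have hpa : a = p := by simpa using h1
        have hX' : X' = Fin.snoc c q := by
          funext d'
          induction d' using Fin.lastCases with
          | last => simpa using h4
          | cast e' =>
              rw [Fin.snoc_castSucc, h5 _ (Fin.castSucc_lt_last e').ne, Fin.snoc_castSucc]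
        rw [hX'] at hs
        obtain ⟨ms', hms', hc⟩ := ih c c' q b hs
        refine ⟨ms', hms', ?_⟩
        rw [cost_cons]
        have := hw p q
        linarith

/-- Decomposition at the first move of the largest disc. -/
lemma first_big :
    ∀ (ms : List (Peg × Peg)) {m : ℕ} (c c' : Conf m) (a b : Peg),
      (∀ d, validPeg (c d)) → validPeg a → a ≠ b →
      Solves (Fin.snoc c a) ms (Fin.snoc c' b) →
      ∃ x ms1 ms2, ms = ms1 ++ (a, x) :: ms2 ∧ validPeg x ∧ x ≠ a ∧
        Solves (Fin.snoc c a) ms1 (Fin.snoc (fun _ : Fin m => 6 - a - x) a) ∧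
        Solves (Fin.snoc (fun _ : Fin m => 6 - a - x) x) ms2 (Fin.snoc c' b) := by
  intro ms
  induction ms with
  | nil =>
      intro m c c' a b hvc hva hab h
      have := congrFun (solves_nil_eq h) (Fin.last m)
      simp at this
      exact absurd this hab
  | cons hd tl ih =>
      intro m c c' a b hvc hva hab h
      obtain ⟨p, q⟩ := hd
      obtain ⟨X', hm, hs⟩ := solves_cons_inv h
      obtain ⟨hvp, hvq, hpq, d, h1, h2, h3, h4, h5⟩ := id hm
      rcases Fin.eq_castSucc_or_eq_last d with ⟨e, rfl⟩ | rfl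
      · -- a small disc moves first
        set c₂ : Conf m := fun d' => X' d'.castSucc with hc₂
        have hX' : X' = Fin.snoc c₂ a := by
          funext d'
          induction d' using Fin.lastCases with
          | last =>
              rw [Fin.snoc_last, h5 _ (Fin.castSucc_lt_last e).ne', Fin.snoc_last]
          | cast e' => rw [Fin.snoc_castSucc]
        have hvc₂ : ∀ d', validPeg (c₂ d') := by
          intro d'
          by_cases hde : d' = e
          · subst hde
            have : c₂ d' = q := h4
            rw [this]; exact hvq
          · have : c₂ d' = c d' := by
              show X' d'.castSucc = c d'
              rw [h5 _ (fun hcontra => hde (Fin.castSucc_injective _ hcontra)), Fin.snoc_castSucc]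
            rw [this]; exact hvc d'
        rw [hX'] at hs hm
        obtain ⟨x, ms1, ms2, hsplit, hvx, hxa, hS1, hS2⟩ := ih c₂ c' a b hvc₂ hva hab hs
        exact ⟨x, (p, q) :: ms1, ms2, by rw [hsplit]; rfl, hvx, hxa, Solves.cons hm hS1, hS2⟩
      · -- the big disc moves first
        have hpa : a = p := by simpa using h1
        subst hpa
        have hcz : c = fun _ : Fin m => 6 - a - q := by
          funext d0
          have hda : c d0 ≠ a := by
            intro he
            have := h2 d0.castSucc (by simpa using he)
            exact absurd this (Fin.castSucc_lt_last d0).not_ge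
          have hdq : c d0 ≠ q := by
            intro he
            have := h3 d0.castSucc (by simpa using he)
            exact absurd this (by simp [Fin.le_last])
          exact third_unique hva hvq (hvc d0) hpq hda hdq
        have hX' : X' = Fin.snoc (fun _ : Fin m => 6 - a - q) q := by
          funext d'
          induction d' using Fin.lastCases with
          | last => simpa using h4
          | cast e' =>
              rw [Fin.snoc_castSucc, h5 _ (Fin.castSucc_lt_last e').ne, Fin.snoc_castSucc]
              exact congrFun hcz e'
        rw [hX'] at hs
        refine ⟨q, [], tl, rfl, hvq, Ne.symm hpq, ?_, hs⟩
        rw [← hcz]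
        exact Solves.nil _
  
end HanoiAux3
section HanoiAux4

variable {w : Peg → Peg → ℝ}

lemma lb2 (hw : ∀ i j : Peg, 0 ≤ w i j) {i j k : Peg}
    (hvi : validPeg i) (hvj : validPeg j) (hvk : validPeg k)
    (hij : i ≠ j) (hki : k ≠ i) (hkj : k ≠ j) {m : ℕ} :
    ∀ (N : ℕ) (ms : List (Peg × Peg)), ms.length ≤ N → ∀ s : Peg, validPeg s →
      Solves (Fin.snoc (fun _ : Fin m => s) i) ms (Fin.snoc (fun _ : Fin m => j) j) →
      min (C w m s k + w i j + C w m k j)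
          (C w m s j + w i k + C w m j i + w k j + C w m i j) ≤ cost w ms := by
  intro N
  induction N with
  | zero =>
      intro ms hlen s hvs hsol
      have hnil : ms = [] := List.eq_nil_of_length_eq_zero (Nat.le_zero.mp hlen)
      subst hnil
      have := congrFun (solves_nil_eq hsol) (Fin.last m)
      simp at this
      exact absurd this hij
  | succ N ihN =>
      intro ms hlen s hvs hsol
      have hkdef : k = 6 - i - j := third_unique hvi hvj hvk hij hki hkj
      have hz1 : 6 - i - j = k := hkdef.symm
      have hz2 : 6 - i - k = j := (peg_arith hvi hvj hij hkdef).2.2.2.1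
      have hz4 : 6 - k - i = j := (peg_arith hvi hvj hij hkdef).2.2.2.2.1
      have hz3 : 6 - k - j = i := (peg_arith hvi hvj hij hkdef).2.2.2.2.2
      obtain ⟨x, ms1, ms2, hsplit, hvx, hxi, hS1, hS2⟩ :=
        first_big ms (fun _ => s) (fun _ => j) i j (fun _ => hvs) hvi hij hsol
      subst hsplit
      rcases peg_resolve hvi hvj hvk hvx hij hki hkj hxi with hx | hx <;> rw [hx] at hS1 hS2 ⊢
      · -- first big move i → j ; here 6 - i - x = k
        rw [hz1] at hS1 hS2
        obtain ⟨p1, hp1, hc1⟩ := proj hw ms1 _ _ _ _ hS1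
        obtain ⟨p2, hp2, hc2⟩ := proj hw ms2 _ _ _ _ hS2
        have e1 : C w m s k ≤ cost w p1 := C_le_cost hw hp1
        have e2 : C w m k j ≤ cost w p2 := C_le_cost hw hp2
        refine le_trans (min_le_left _ _) ?_
        rw [cost_append, cost_cons]
        linarith
      · -- first big move i → k ; here 6 - i - k = j
        rw [hz2] at hS1 hS2
        obtain ⟨p1, hp1, hc1⟩ := proj hw ms1 _ _ _ _ hS1
        have e1 : C w m s j ≤ cost w p1 := C_le_cost hw hp1
        obtain ⟨x2, u2, v2, hsplit2, hvx2, hx2k, hU, hV⟩ :=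
          first_big ms2 (fun _ => j) (fun _ => j) k j (fun _ => hvj) hvk hkj hS2
        subst hsplit2
        have hx2 : x2 = j ∨ x2 = i :=
          peg_resolve hvk hvj hvi hvx2 hkj (Ne.symm hki) hij hx2k
        rcases hx2 with hx2e | hx2e <;> rw [hx2e] at hU hV ⊢
        · -- second big move k → j ; 6 - k - j = i
          rw [hz3] at hU hV
          obtain ⟨q1, hq1, hd1⟩ := proj hw u2 _ _ _ _ hU
          obtain ⟨q2, hq2, hd2⟩ := proj hw v2 _ _ _ _ hV
          have e2 : C w m j i ≤ cost w q1 := C_le_cost hw hq1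
          have e3 : C w m i j ≤ cost w q2 := C_le_cost hw hq2
          refine le_trans (min_le_right _ _) ?_
          rw [cost_append, cost_cons, cost_append, cost_cons]
          linarith
        · -- second big move k → i ; 6 - k - i = j; recurse on v2
          rw [hz4] at hU hV
          have hd1 : 0 ≤ cost w u2 := cost_nonneg hw u2
          have hlen2 : v2.length ≤ N := by
            rw [List.length_append, List.length_cons, List.length_append,
              List.length_cons] at hlen
            omega
          have hrec := ihN v2 hlen2 j hvj hV
          have htri : C w m s k ≤ C w m s j + C w m j k := C_triangle hw hvs hvk hvj
          have hwik := hw i k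
          have hwki := hw k i
          have hCjj : 0 ≤ C w m j j := C_nonneg hw m j j
          rw [cost_append, cost_cons, cost_append, cost_cons]
          rcases min_le_iff.mp hrec with h' | h'
          · refine le_trans (min_le_left _ _) ?_
            linarith
          · refine le_trans (min_le_right _ _) ?_
            linarith

end HanoiAux4
section HanoiAux5

variable {w : Peg → Peg → ℝ}

lemma att (hw : ∀ i j : Peg, 0 ≤ w i j) :
    ∀ (n : ℕ) (a b : Peg), validPeg a → validPeg b →
      (∃ ms, IsSolution n a b ms ∧ cost w ms = C w n a b) ∧
      (∀ m' : ℕ, n = m' + 1 → a ≠ b →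
        C w n a b = min (C w m' a (6 - a - b) + w a b + C w m' (6 - a - b) b)
          (C w m' a b + w a (6 - a - b) + C w m' b a + w (6 - a - b) b + C w m' a b)) := by
  intro n
  induction n with
  | zero =>
      intro a b hva hvb
      constructor
      · have he : (fun _ : Fin 0 => a) = (fun _ : Fin 0 => b) := funext fun d => d.elim0
        exact ⟨[], by show Solves _ _ _; rw [he]; exact Solves.nil _,
          by rw [C_zero]; simp [cost]⟩
      · intro m' hm'; omega
  | succ n ih =>
      intro a b hva hvb
      by_cases hab : a = b
      · subst hab
        refine ⟨⟨[], Solves.nil _, by rw [C_self hw]; simp [cost]⟩, ?_⟩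
        intro m' _ h'; exact absurd rfl h'
      · obtain ⟨hvz, hza, hzb⟩ := third_valid hva hvb hab
        obtain ⟨s1, hs1, hc1⟩ := (ih a (6 - a - b) hva hvz).1
        obtain ⟨s2, hs2, hc2⟩ := (ih (6 - a - b) b hvz hvb).1
        obtain ⟨t1, ht1, hd1⟩ := (ih a b hva hvb).1
        obtain ⟨t2, ht2, hd2⟩ := (ih b a hvb hva).1
        have hsolD : IsSolution (n + 1) a b (s1 ++ (a, b) :: s2) :=
          build_two hva hvb hab hza hzb hs1 hs2
        have hcostD : cost w (s1 ++ (a, b) :: s2)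
            = C w n a (6 - a - b) + w a b + C w n (6 - a - b) b := by
          rw [cost_append, cost_cons, hc1, hc2]; ring
        have hsolB : IsSolution (n + 1) a b (t1 ++ (a, 6 - a - b) :: (t2 ++ (6 - a - b, b) :: t1)) :=
          build_three hva hvb hvz hab hza hzb ht1 ht2 ht1
        have hcostB : cost w (t1 ++ (a, 6 - a - b) :: (t2 ++ (6 - a - b, b) :: t1))
            = C w n a b + w a (6 - a - b) + C w n b a + w (6 - a - b) b + C w n a b := by
          rw [cost_append, cost_cons, cost_append, cost_cons, hd1, hd2]; ring
        have hub1 : C w (n + 1) a b ≤ C w n a (6 - a - b) + w a b + C w n (6 - a - b) b := by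
          rw [← hcostD]; exact C_le_cost hw hsolD
        have hub2 : C w (n + 1) a b
            ≤ C w n a b + w a (6 - a - b) + C w n b a + w (6 - a - b) b + C w n a b := by
          rw [← hcostB]; exact C_le_cost hw hsolB
        have hlb : min (C w n a (6 - a - b) + w a b + C w n (6 - a - b) b)
            (C w n a b + w a (6 - a - b) + C w n b a + w (6 - a - b) b + C w n a b)
            ≤ C w (n + 1) a b := by
          apply le_C ⟨_, hsolD⟩
          intro ms hms
          have hms' : Solves (Fin.snoc (fun _ : Fin n => a) a) ms
              (Fin.snoc (fun _ : Fin n => b) b) := by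
            rw [snoc_const, snoc_const]; exact hms
          exact lb2 hw hva hvb hvz hab hza hzb ms.length ms le_rfl a hva hms'
        have hC : C w (n + 1) a b
            = min (C w n a (6 - a - b) + w a b + C w n (6 - a - b) b)
              (C w n a b + w a (6 - a - b) + C w n b a + w (6 - a - b) b + C w n a b) :=
          le_antisymm (le_min hub1 hub2) hlb
        constructor
        · rcases le_total (C w n a (6 - a - b) + w a b + C w n (6 - a - b) b)
              (C w n a b + w a (6 - a - b) + C w n b a + w (6 - a - b) b + C w n a b) with hDB | hBD
          · exact ⟨_, hsolD, by rw [hcostD, hC, min_eq_left hDB]⟩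
          · exact ⟨_, hsolB, by rw [hcostB, hC, min_eq_right hBD]⟩
        · intro m' hm' _
          have hnm : n = m' := by omega
          subst hnm
          exact hC
  
end HanoiAux5
section HanoiAux6

variable {w : Peg → Peg → ℝ}

lemma keyW (hw : ∀ i j : Peg, 0 ≤ w i j) {i j k : Peg}
    (hvi : validPeg i) (hvj : validPeg j) (hvk : validPeg k)
    (hij : i ≠ j) (hki : k ≠ i) (hkj : k ≠ j) :
    ∀ n : ℕ, 1 ≤ n →
      (∀ ms : List (Peg × Peg), IsSolution n i j ms → cost w ms = C w n i j →
        (i, j) ∉ ms) →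
      w i k + w k j < w i j := by
  have hkdef : k = 6 - i - j := third_unique hvi hvj hvk hij hki hkj
  intro n
  induction n using Nat.strong_induction_on with
  | _ n ihn =>
    intro hn h
    obtain ⟨m, rfl⟩ : ∃ m, n = m + 1 := ⟨n - 1, by omega⟩
    have hC := ((att hw (m + 1) i j hvi hvj).2 m rfl hij)
    rw [← hkdef] at hC
    obtain ⟨s1, hs1, hc1⟩ := (att hw m i k hvi hvk).1
    obtain ⟨s2, hs2, hc2⟩ := (att hw m k j hvk hvj).1
    obtain ⟨t1, ht1, hd1⟩ := (att hw m i j hvi hvj).1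
    obtain ⟨t2, ht2, hd2⟩ := (att hw m j i hvj hvi).1
    have hsolD : IsSolution (m + 1) i j (s1 ++ (i, j) :: s2) :=
      build_two hvi hvj hij hki hkj hs1 hs2
    have hcostD : cost w (s1 ++ (i, j) :: s2) = C w m i k + w i j + C w m k j := by
      rw [cost_append, cost_cons, hc1, hc2]; ring
    by_cases hDB : C w m i k + w i j + C w m k j
        ≤ C w m i j + w i k + C w m j i + w k j + C w m i j
    · -- direct solution is optimal: contradiction with h
      have hCD : C w (m + 1) i j = C w m i k + w i j + C w m k j := by
        rw [hC, min_eq_left hDB]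
      have hmem := h _ hsolD (by rw [hcostD, hCD])
      exact absurd (List.mem_append.mpr (Or.inr List.mem_cons_self)) hmem
    · push_neg at hDB
      have hCB : C w (m + 1) i j
          = C w m i j + w i k + C w m j i + w k j + C w m i j := by
        rw [hC, min_eq_right hDB.le]
      rcases Nat.eq_zero_or_pos m with rfl | hm
      · rw [C_zero, C_zero, C_zero, C_zero] at hDB
        linarith
      · -- derive the hypothesis at level m and recurse
        have h' : ∀ ms : List (Peg × Peg), IsSolution m i j ms →
            cost w ms = C w m i j → (i, j) ∉ ms := by
          intro ms hms hcost hmem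
          have hsol3 : IsSolution (m + 1) i j (ms ++ (i, k) :: (t2 ++ (k, j) :: t1)) :=
            build_three hvi hvj hvk hij hki hkj hms ht2 ht1
          have hcost3 : cost w (ms ++ (i, k) :: (t2 ++ (k, j) :: t1))
              = C w (m + 1) i j := by
            rw [cost_append, cost_cons, cost_append, cost_cons, hcost, hd2, hd1, hCB]
            ring
          exact (h _ hsol3 hcost3) (List.mem_append.mpr (Or.inl hmem))
        exact ihn m (by omega) hm h'

end HanoiAux6

/-- if no minimum-cost solution from peg `i` to peg `j` contains
a move of a disc from peg `i` to peg `j`, then the two stated conditions hold. -/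
theorem stmt10 (w : Peg → Peg → ℝ) (hw : ∀ i j : Peg, 0 ≤ w i j)
    (n : ℕ) (hn : 1 ≤ n)
    (i j k : Peg) (hi : validPeg i) (hj : validPeg j) (hij : i ≠ j)
    (hk : k = 6 - i - j)
    (h : ∀ ms : List (Peg × Peg), IsSolution n i j ms → cost w ms = C w n i j →
      (i, j) ∉ ms) :
    w i j > w i k + w k j +
      max 0 (2 * C w (n - 1) i j + C w (n - 1) j i - C w (n - 1) i k - C w (n - 1) k j) ∧
    C w n i j = 2 * C w (n - 1) i j + C w (n - 1) j i + w i k + w k j := by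
  obtain ⟨hvk, hki, hkj⟩ := third_valid hi hj hij
  rw [← hk] at hvk hki hkj
  obtain ⟨m, rfl⟩ : ∃ m, n = m + 1 := ⟨n - 1, by omega⟩
  have hm1 : m + 1 - 1 = m := by omega
  rw [hm1]
  have hC := ((att hw (m + 1) i j hi hj).2 m rfl hij)
  rw [← hk] at hC
  -- the direct solution with exact cost
  obtain ⟨s1, hs1, hc1⟩ := (att hw m i k hi hvk).1
  obtain ⟨s2, hs2, hc2⟩ := (att hw m k j hvk hj).1
  have hsolD : IsSolution (m + 1) i j (s1 ++ (i, j) :: s2) :=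
    build_two hi hj hij hki hkj hs1 hs2
  have hcostD : cost w (s1 ++ (i, j) :: s2) = C w m i k + w i j + C w m k j := by
    rw [cost_append, cost_cons, hc1, hc2]; ring
  have hBD : C w m i j + w i k + C w m j i + w k j + C w m i j
      < C w m i k + w i j + C w m k j := by
    by_contra hcon
    push_neg at hcon
    have hCD : C w (m + 1) i j = C w m i k + w i j + C w m k j := by
      rw [hC, min_eq_left hcon]
    have hmem := h _ hsolD (by rw [hcostD, hCD])
    exact absurd (List.mem_append.mpr (Or.inr List.mem_cons_self)) hmem
  have hCB : C w (m + 1) i j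
      = C w m i j + w i k + C w m j i + w k j + C w m i j := by
    rw [hC, min_eq_right hBD.le]
  have hWk : w i k + w k j < w i j :=
    keyW hw hi hj hvk hij hki hkj (m + 1) (Nat.le_add_left 1 m) h
  constructor
  · have hmax : max 0 (2 * C w m i j + C w m j i - C w m i k - C w m k j)
        < w i j - w i k - w k j := by
      apply max_lt
      · linarith
      · linarith
    linarith
  · rw [hCB]; ring
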